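/- Suppose A ∈ ℝ^{N×d} satisfies RIP at levels s and 2s with constants δ_s, δ_{2s} < 1. Let x ∈ ℝ^d, let U be the set of the s largest-magnitude entries of x, and suppose Ax̃ = 0 fails but instead A x = r for some residual r ∈ ℝ^N. Then ‖x_U‖₂ ≤ (δ_{2s}/(1−δ_s))·(1/√s)·‖x‖₁ + (√(1+δ_s)/(1−δ_s))·‖Ax‖₂. -/

import Mathlib

open Finset Matrix

noncomputable def l1 {ι : Type*} [Fintype ι] (x : ι → ℝ) : ℝ := ∑ i, |x i|

noncomputable def l2 {ι : Type*} [Fintype ι] (x : ι → ℝ) : ℝ := Real.sqrt (∑ i, (x i) ^ 2)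

open scoped Classical in
/-- `x` has at most `m` nonzero entries. -/
def sparse {ι : Type*} [Fintype ι] (m : ℕ) (x : ι → ℝ) : Prop :=
  (Finset.univ.filter (fun i => x i ≠ 0)).card ≤ m

/-- Restricted Isometry Property at level `m` with constant `δ`. -/
def RIP {N d : ℕ} (A : Matrix (Fin N) (Fin d) ℝ) (m : ℕ) (δ : ℝ) : Prop :=
  ∀ x : Fin d → ℝ, sparse m x →
    (1 - δ) * (l2 x) ^ 2 ≤ (l2 (A.mulVec x)) ^ 2 ∧
    (l2 (A.mulVec x)) ^ 2 ≤ (1 + δ) * (l2 x) ^ 2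

/-- Restriction of a vector to the coordinates in `S` (zero elsewhere). -/
def restr {d : ℕ} (S : Finset (Fin d)) (x : Fin d → ℝ) : Fin d → ℝ :=
  fun i => if i ∈ S then x i else 0

/-!
By RIP at level `s`, `(1 - δₛ)‖x_U‖² ≤ ‖A x_U‖² = ⟨A x_U, A x⟩ - ⟨A x_U, A x_{Uᶜ}⟩`, and the first
term is at most `√(1 + δₛ) ‖x_U‖ ‖A x‖` by Cauchy–Schwarz. For the second, polarization shows that
RIP at level `2s` gives `|⟨A u, A v⟩| ≤ δ₂ₛ ‖u‖ ‖v‖` for orthogonal `s`-sparse `u`, `v`. Cutting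
`Uᶜ` into blocks of the `s` largest remaining entries (shelling), every entry of a block is at most
the mean of the previous block, so the `ℓ²` norms of the blocks sum to at most `‖x‖₁ / √s`.
Dividing by `‖x_U‖` gives the bound.
-/

section Norms

variable {ι : Type*} [Fintype ι]

lemma sparse_iff {m : ℕ} {x : ι → ℝ} :
    sparse m x ↔ ∃ S : Finset ι, S.card ≤ m ∧ ∀ i ∉ S, x i = 0 := by
  classical
  refine ⟨fun h => ⟨_, h, fun i hi => by simpa using hi⟩, ?_⟩
  rintro ⟨S, hS, hx⟩
  refine (card_le_card fun i hi => ?_).trans hS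
  by_contra h
  exact (mem_filter.1 hi).2 (hx i h)

lemma sparse.add {m m' : ℕ} {u v : ι → ℝ} (hu : sparse m u) (hv : sparse m' v) :
    sparse (m + m') (u + v) := by
  classical
  obtain ⟨S, hS, hu⟩ := sparse_iff.1 hu
  obtain ⟨S', hS', hv⟩ := sparse_iff.1 hv
  refine sparse_iff.2 ⟨S ∪ S', (card_union_le S S').trans (add_le_add hS hS'), fun i hi => ?_⟩
  rw [mem_union, not_or] at hi
  simp [hu i hi.1, hv i hi.2]

lemma sparse.smul {m : ℕ} {u : ι → ℝ} (hu : sparse m u) (c : ℝ) : sparse m (c • u) := by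
  obtain ⟨S, hS, hu⟩ := sparse_iff.1 hu
  exact sparse_iff.2 ⟨S, hS, fun i hi => by simp [hu i hi]⟩

lemma sparse.sub {m m' : ℕ} {u v : ι → ℝ} (hu : sparse m u) (hv : sparse m' v) :
    sparse (m + m') (u - v) := by
  simpa [sub_eq_add_neg] using hu.add (hv.smul (-1))

lemma l2_nonneg (x : ι → ℝ) : 0 ≤ l2 x := Real.sqrt_nonneg _

lemma l1_nonneg (x : ι → ℝ) : 0 ≤ l1 x := sum_nonneg fun _ _ => abs_nonneg _

lemma l2_sq (x : ι → ℝ) : l2 x ^ 2 = x ⬝ᵥ x := by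
  rw [l2, Real.sq_sqrt (sum_nonneg fun _ _ => sq_nonneg _), dotProduct]
  simp only [sq]

lemma eq_zero_of_l2_eq_zero {x : ι → ℝ} (h : l2 x = 0) : x = 0 := by
  rw [← dotProduct_self_eq_zero, ← l2_sq, h, sq, zero_mul]

lemma l2_smul (c : ℝ) (x : ι → ℝ) : l2 (c • x) = |c| * l2 x := by
  rw [← Real.sqrt_sq (l2_nonneg (c • x)), l2_sq, smul_dotProduct, dotProduct_smul, smul_eq_mul,
    smul_eq_mul, ← mul_assoc, ← sq, ← l2_sq, ← mul_pow, Real.sqrt_sq_eq_abs, abs_mul,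
    abs_of_nonneg (l2_nonneg x)]

lemma dotProduct_le_l2_mul_l2 (x y : ι → ℝ) : x ⬝ᵥ y ≤ l2 x * l2 y :=
  Real.sum_mul_le_sqrt_mul_sqrt _ _ _

end Norms

namespace RIP

variable {N d m m' : ℕ} {A : Matrix (Fin N) (Fin d) ℝ} {δ : ℝ}

lemma l2_mulVec_le (hA : RIP A m δ) {u : Fin d → ℝ} (hu : sparse m u) :
    l2 (A *ᵥ u) ≤ √(1 + δ) * l2 u := by
  rw [← Real.sqrt_sq (l2_nonneg (A *ᵥ u)), ← Real.sqrt_sq (l2_nonneg u),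
    ← Real.sqrt_mul' _ (sq_nonneg _)]
  exact Real.sqrt_le_sqrt (hA u hu).2

lemma abs_dotProduct_mulVec_le (hA : RIP A (m + m') δ) {p q : Fin d → ℝ} (hp : sparse m p)
    (hq : sparse m' q) (hpq : p ⬝ᵥ q = 0) :
    |A *ᵥ p ⬝ᵥ A *ᵥ q| ≤ δ * (l2 p ^ 2 + l2 q ^ 2) / 2 := by
  have hadd := hA (p + q) (hp.add hq)
  have hsub := hA (p - q) (hp.sub hq)
  simp only [l2_sq, mulVec_add, mulVec_sub, add_dotProduct, dotProduct_add, sub_dotProduct,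
    dotProduct_sub, dotProduct_comm q p, hpq, dotProduct_comm (A *ᵥ q) (A *ᵥ p)] at hadd hsub ⊢
  rw [abs_le]
  constructor <;> linarith [hadd.1, hadd.2, hsub.1, hsub.2]

lemma abs_dotProduct_mulVec_le_mul (hA : RIP A (m + m') δ) {u v : Fin d → ℝ} (hu : sparse m u)
    (hv : sparse m' v) (huv : u ⬝ᵥ v = 0) :
    |A *ᵥ u ⬝ᵥ A *ᵥ v| ≤ δ * l2 u * l2 v := by
  rcases (l2_nonneg u).eq_or_lt with ha | ha
  · rw [← ha]
    simp [eq_zero_of_l2_eq_zero ha.symm]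
  rcases (l2_nonneg v).eq_or_lt with hb | hb
  · rw [← hb]
    simp [eq_zero_of_l2_eq_zero hb.symm]
  -- rescaling to `‖v‖ • u` and `‖u‖ • v` turns the arithmetic mean into the geometric one
  have h := hA.abs_dotProduct_mulVec_le (hu.smul (l2 v)) (hv.smul (l2 u))
    (by rw [smul_dotProduct, dotProduct_smul, huv, smul_zero, smul_zero])
  rw [mulVec_smul, mulVec_smul, smul_dotProduct, dotProduct_smul, smul_eq_mul, smul_eq_mul,
    abs_mul, abs_mul, l2_smul, l2_smul, abs_of_pos ha, abs_of_pos hb] at h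
  refine le_of_mul_le_mul_left ?_ (mul_pos ha hb)
  nlinarith

end RIP

lemma Finset.exists_subset_card_eq_forall_sdiff_le {ι α : Type*} [DecidableEq ι] [LinearOrder α]
    (f : ι → α) (T : Finset ι) {n : ℕ} (hn : n ≤ T.card) :
    ∃ B ⊆ T, B.card = n ∧ ∀ i ∈ B, ∀ j ∈ T \ B, f j ≤ f i := by
  induction n with
  | zero => exact ⟨∅, empty_subset T, card_empty, by simp⟩
  | succ n ih =>
    obtain ⟨B, hBT, hBcard, hB⟩ := ih (by omega)
    have hne : (T \ B).Nonempty := by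
      rw [← card_pos, card_sdiff_of_subset hBT]
      omega
    obtain ⟨k, hk, hkmax⟩ := exists_max_image (T \ B) f hne
    rw [mem_sdiff] at hk
    refine ⟨insert k B, insert_subset hk.1 hBT, by rw [card_insert_of_notMem hk.2, hBcard], ?_⟩
    intro i hi j hj
    have hj' : j ∈ T \ B := by
      rw [mem_sdiff, mem_insert, not_or] at hj
      exact mem_sdiff.2 ⟨hj.1, hj.2.2⟩
    rcases mem_insert.1 hi with rfl | hi
    · exact hkmax j hj'
    · exact hB i hi j hj'

section Restriction

variable {d : ℕ}

lemma restr_add_restr_sdiff {B T : Finset (Fin d)} (h : B ⊆ T) (x : Fin d → ℝ) :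
    restr B x + restr (T \ B) x = restr T x := by
  funext i
  by_cases hB : i ∈ B
  · simp [restr, hB, h hB]
  · by_cases hT : i ∈ T <;> simp [restr, hB, hT]

lemma restr_add_restr_compl (U : Finset (Fin d)) (x : Fin d → ℝ) :
    restr U x + restr Uᶜ x = x := by
  funext i
  by_cases hU : i ∈ U <;> simp [restr, hU]

lemma sparse_restr {m : ℕ} {S : Finset (Fin d)} (hS : S.card ≤ m) (x : Fin d → ℝ) :
    sparse m (restr S x) :=
  sparse_iff.2 ⟨S, hS, fun _ hi => if_neg hi⟩

lemma dotProduct_restr_eq_zero {S T : Finset (Fin d)} (h : Disjoint S T) (x y : Fin d → ℝ) :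
    restr S x ⬝ᵥ restr T y = 0 := by
  refine sum_eq_zero fun i _ => ?_
  by_cases hS : i ∈ S
  · simp [restr, disjoint_left.1 h hS]
  · simp [restr, hS]

lemma l2_restr_le {s : ℕ} (hs : 0 < s) {B : Finset (Fin d)} (hB : B.card ≤ s) (x : Fin d → ℝ)
    {a : ℝ} (ha : 0 ≤ a) (hx : ∀ i ∈ B, s * |x i| ≤ a) :
    l2 (restr B x) ≤ a / √s := by
  have hs' : (0 : ℝ) < s := Nat.cast_pos.2 hs
  have hsq : ∑ i, restr B x i ^ 2 ≤ a ^ 2 / s :=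
    calc ∑ i, restr B x i ^ 2 = ∑ i ∈ B, |x i| ^ 2 := by
          rw [← sum_subset (subset_univ B) fun i _ hi => by simp [restr, hi]]
          exact sum_congr rfl fun i hi => by simp [restr, hi]
      _ ≤ ∑ _i ∈ B, (a / s) ^ 2 := sum_le_sum fun i hi =>
          pow_le_pow_left₀ (abs_nonneg _) ((le_div_iff₀' hs').2 (hx i hi)) 2
      _ ≤ s * (a / s) ^ 2 := by
          rw [sum_const, nsmul_eq_mul]
          gcongr
      _ = a ^ 2 / s := by field_simp
  calc l2 (restr B x) ≤ √(a ^ 2 / s) := Real.sqrt_le_sqrt hsq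
    _ = a / √s := by rw [Real.sqrt_div (sq_nonneg a), Real.sqrt_sq ha]

lemma map_restr_le_of_forall_card_le {s : ℕ} (hs : 0 < s) (f : (Fin d → ℝ) →+ ℝ) {c : ℝ}
    (hc : 0 ≤ c) (x : Fin d → ℝ) (T : Finset (Fin d)) {a : ℝ} (ha : 0 ≤ a)
    (hx : ∀ i ∈ T, s * |x i| ≤ a)
    (hf : ∀ B ⊆ T, B.card ≤ s → f (restr B x) ≤ c * l2 (restr B x)) :
    f (restr T x) ≤ c * ((a + ∑ i ∈ T, |x i|) / √s) := by
  induction T using Finset.strongInduction generalizing a with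
  | H T ih =>
  rcases le_or_gt T.card s with hT | hT
  · have hsum : 0 ≤ (∑ i ∈ T, |x i|) / √s := by positivity
    calc f (restr T x) ≤ c * l2 (restr T x) := hf T subset_rfl hT
      _ ≤ c * (a / √s) := by gcongr; exact l2_restr_le hs hT x ha hx
      _ ≤ c * ((a + ∑ i ∈ T, |x i|) / √s) := by rw [add_div]; gcongr; linarith
  obtain ⟨B, hBT, hBcard, hB⟩ := exists_subset_card_eq_forall_sdiff_le (fun i => |x i|) T hT.le
  have hBne : B.Nonempty := card_pos.1 (hBcard ▸ hs)
  have hrest : f (restr (T \ B) x) ≤ c * ((∑ i ∈ B, |x i| + ∑ i ∈ T \ B, |x i|) / √s) := by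
    refine ih _ (sdiff_ssubset hBT hBne) (sum_nonneg fun _ _ => abs_nonneg _) (fun j hj => ?_)
      (fun C hC => hf C (hC.trans sdiff_subset))
    simpa [hBcard] using card_nsmul_le_sum B (fun i => |x i|) _ fun i hi => hB i hi j hj
  have hhead : f (restr B x) ≤ c * (a / √s) :=
    (hf B hBT hBcard.le).trans
      (by gcongr; exact l2_restr_le hs hBcard.le x ha fun i hi => hx i (hBT hi))
  calc f (restr T x) = f (restr B x) + f (restr (T \ B) x) := by
        rw [← map_add, restr_add_restr_sdiff hBT]
    _ ≤ c * (a / √s) + c * ((∑ i ∈ B, |x i| + ∑ i ∈ T \ B, |x i|) / √s) := add_le_add hhead hrest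
    _ = c * ((a + ∑ i ∈ T, |x i|) / √s) := by rw [← sum_sdiff hBT]; ring

end Restriction

lemma RIP.neg_dotProduct_mulVec_restr_compl_le {N d s : ℕ} {A : Matrix (Fin N) (Fin d) ℝ} {δ : ℝ}
    (hA : RIP A (2 * s) δ) (hδ : 0 ≤ δ) (x : Fin d → ℝ) {U : Finset (Fin d)} (hUcard : U.card = s)
    (hUmax : ∀ i ∈ U, ∀ j ∉ U, |x j| ≤ |x i|) :
    -(A *ᵥ restr U x ⬝ᵥ A *ᵥ restr Uᶜ x) ≤ δ * l2 (restr U x) * (l1 x / √s) := by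
  rcases s.eq_zero_or_pos with rfl | hs
  · have h0 : restr U x = 0 := funext fun i => if_neg (card_eq_zero.1 hUcard ▸ notMem_empty i)
    simp [h0]
  rw [two_mul] at hA
  let f : (Fin d → ℝ) →+ ℝ := AddMonoidHom.mk' (fun v => -(A *ᵥ restr U x ⬝ᵥ A *ᵥ v))
    fun v w => by rw [mulVec_add, dotProduct_add, neg_add]
  have hf := map_restr_le_of_forall_card_le hs f (mul_nonneg hδ (l2_nonneg _)) x Uᶜ
    (sum_nonneg fun i _ => abs_nonneg (x i))
    (fun j hj => by
      simpa [hUcard] using card_nsmul_le_sum U (fun i => |x i|) _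
        fun i hi => hUmax i hi j (mem_compl.1 hj))
    (fun B hB hBcard => (neg_le_abs _).trans <|
      hA.abs_dotProduct_mulVec_le_mul (sparse_restr hUcard.le x) (sparse_restr hBcard x)
        (dotProduct_restr_eq_zero (disjoint_of_subset_right hB disjoint_compl_right) x x))
  rwa [sum_add_sum_compl, ← l1] at hf

theorem stmt10_general {N d s : ℕ} (A : Matrix (Fin N) (Fin d) ℝ)
    (δs δ2s : ℝ) (hδs1 : δs < 1) (hδ2s0 : 0 ≤ δ2s)
    (hRs : RIP A s δs) (hR2s : RIP A (2 * s) δ2s)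
    (x : Fin d → ℝ) (U : Finset (Fin d)) (hUcard : U.card = s)
    (hUmax : ∀ i ∈ U, ∀ j ∉ U, |x j| ≤ |x i|) :
    l2 (restr U x) ≤ (δ2s / (1 - δs)) * (1 / Real.sqrt s) * l1 x
      + (Real.sqrt (1 + δs) / (1 - δs)) * l2 (A.mulVec x) := by
  set u := restr U x
  set K := √(1 + δs) * l2 (A *ᵥ x) + δ2s * (l1 x / √s)
  have hu : sparse s u := sparse_restr hUcard.le x
  have hsplit : l2 (A *ᵥ u) ^ 2 = A *ᵥ u ⬝ᵥ A *ᵥ x - A *ᵥ u ⬝ᵥ A *ᵥ restr Uᶜ x := by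
    have hAx : A *ᵥ x = A *ᵥ u + A *ᵥ restr Uᶜ x := by rw [← mulVec_add, restr_add_restr_compl]
    rw [l2_sq, hAx, dotProduct_add]
    ring
  have hkey : (1 - δs) * l2 u ^ 2 ≤ l2 u * K :=
    calc (1 - δs) * l2 u ^ 2 ≤ l2 (A *ᵥ u) ^ 2 := (hRs u hu).1
      _ ≤ l2 (A *ᵥ u) * l2 (A *ᵥ x) + δ2s * l2 u * (l1 x / √s) := by
        rw [hsplit]
        linarith [dotProduct_le_l2_mul_l2 (A *ᵥ u) (A *ᵥ x),
          hR2s.neg_dotProduct_mulVec_restr_compl_le hδ2s0 x hUcard hUmax]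
      _ ≤ l2 u * K := by
        have := mul_le_mul_of_nonneg_right (hRs.l2_mulVec_le hu) (l2_nonneg (A *ᵥ x))
        linarith
  have hK : (1 - δs) * l2 u ≤ K := by
    rcases (l2_nonneg u).eq_or_lt with h0 | hpos
    · rw [← h0, mul_zero]
      exact add_nonneg (mul_nonneg (Real.sqrt_nonneg _) (l2_nonneg _))
        (mul_nonneg hδ2s0 (div_nonneg (l1_nonneg x) (Real.sqrt_nonneg _)))
    · exact le_of_mul_le_mul_left (by linarith) hpos
  calc l2 u ≤ K / (1 - δs) := (le_div_iff₀ (by linarith)).2 (by linarith)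
    _ = _ := by ring

theorem stmt10 {N d s : ℕ} (A : Matrix (Fin N) (Fin d) ℝ)
    (δs δ2s : ℝ) (hδs0 : 0 ≤ δs) (hδs1 : δs < 1) (hδ2s0 : 0 ≤ δ2s) (hδ2s1 : δ2s < 1)
    (hRs : RIP A s δs) (hR2s : RIP A (2 * s) δ2s)
    (x : Fin d → ℝ) (U : Finset (Fin d)) (hUcard : U.card = s)
    (hUmax : ∀ i ∈ U, ∀ j ∉ U, |x j| ≤ |x i|) :
    l2 (restr U x) ≤ (δ2s / (1 - δs)) * (1 / Real.sqrt s) * l1 x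
      + (Real.sqrt (1 + δs) / (1 - δs)) * l2 (A.mulVec x) :=
  stmt10_general A δs δ2s hδs1 hδ2s0 hRs hR2s x U hUcard hUmax
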